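/- Let J be an antiunitary involution on H and {e_n} an orthonormal basis with J e_n = e_n. Then a bounded T on H⊗H is J-crossable if and only if there is c > 0 such that |Σ_{i,j,k,l} a_{ij} T^{jl}_{ik} b_{kl}| ≤ c ‖a‖_{ℓ²} ‖b‖_{ℓ²} for all a, b ∈ ℓ²(ℕ²), where T^{jl}_{ik} = ⟨e_j⊗e_l, T(e_i⊗e_k)⟩; moreover in this case Cross_J(T)^{ij}_{kl} = T^{jl}_{ik}. -/

import Mathlib

noncomputable section
open scoped InnerProductSpace ComplexConjugate

variable {H K : Type*}

/-- A realization of the Hilbert space tensor square of `H` on a Hilbert space `K`. -/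
structure TensorSquare (H K : Type*) [NormedAddCommGroup H] [InnerProductSpace ℂ H]
    [NormedAddCommGroup K] [InnerProductSpace ℂ K] : Type _ where
  tmul : H → H → K
  tmul_add_left : ∀ a a' b, tmul (a + a') b = tmul a b + tmul a' b
  tmul_add_right : ∀ a b b', tmul a (b + b') = tmul a b + tmul a b'
  tmul_smul_left : ∀ (c : ℂ) a b, tmul (c • a) b = c • tmul a b
  tmul_smul_right : ∀ (c : ℂ) a b, tmul a (c • b) = c • tmul a b
  inner_tmul : ∀ a b c d, ⟪tmul a b, tmul c d⟫_ℂ = ⟪a, c⟫_ℂ * ⟪b, d⟫_ℂ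
  dense_span : Dense (↑(Submodule.span ℂ (Set.range fun p : H × H => tmul p.1 p.2)) : Set K)

/-- A densely defined closed antilinear involution `S` on `H`, together with its adjoint `S*`. -/
structure AntiInvolution (H : Type*) [NormedAddCommGroup H] [InnerProductSpace ℂ H] : Type _ where
  dom : Submodule ℂ H
  toFun : H → H
  dense_dom : Dense (dom : Set H)
  map_add : ∀ x ∈ dom, ∀ y ∈ dom, toFun (x + y) = toFun x + toFun y
  map_smul : ∀ (c : ℂ), ∀ x ∈ dom, toFun (c • x) = (starRingEnd ℂ c) • toFun x
  invol_mem : ∀ x ∈ dom, toFun x ∈ dom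
  invol : ∀ x ∈ dom, toFun (toFun x) = x
  closed_graph : IsClosed {p : H × H | p.1 ∈ dom ∧ toFun p.1 = p.2}
  adjDom : Submodule ℂ H
  adjFun : H → H
  dense_adjDom : Dense (adjDom : Set H)
  adj_spec : ∀ y ∈ adjDom, ∀ x ∈ dom, ⟪adjFun y, x⟫_ℂ = ⟪toFun x, y⟫_ℂ
  adj_max : ∀ y z : H, (∀ x ∈ dom, ⟪z, x⟫_ℂ = ⟪toFun x, y⟫_ℂ) → y ∈ adjDom

section
variable [NormedAddCommGroup H] [InnerProductSpace ℂ H]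
  [NormedAddCommGroup K] [InnerProductSpace ℂ K]

/-- The crossing relation (unbounded `S`): `Tc = Cross_S(T)`. -/
def CrossRelU (τ : TensorSquare H K) (S : AntiInvolution H) (T Tc : K →L[ℂ] K) : Prop :=
  ∀ φ₁ ∈ S.dom, ∀ ψ₁ ∈ S.dom, ∀ φ₂ ∈ S.adjDom, ∀ ψ₂ ∈ S.adjDom,
    ⟪τ.tmul φ₁ φ₂, Tc (τ.tmul ψ₁ ψ₂)⟫_ℂ
      = ⟪τ.tmul φ₂ (S.adjFun ψ₂), T (τ.tmul (S.toFun φ₁) ψ₁)⟫_ℂ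

/-- The crossing relation for an everywhere defined (bounded) antilinear involution `S`
with adjoint `Sstar`. -/
def CrossRelB (τ : TensorSquare H K) (S Sstar : H →SL[starRingEnd ℂ] H) (T Tc : K →L[ℂ] K) :
    Prop :=
  ∀ φ₁ φ₂ ψ₁ ψ₂ : H,
    ⟪τ.tmul φ₁ φ₂, Tc (τ.tmul ψ₁ ψ₂)⟫_ℂ = ⟪τ.tmul φ₂ (Sstar ψ₂), T (τ.tmul (S φ₁) ψ₁)⟫_ℂ

end


/-!
In the Hilbert basis `e i ⊗ e j` of `K`, the crossing relation tested on basis vectors (where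
`J e n = e n`) says exactly that `Cross_J(T)` has the matrix `T^{jl}_{ik}`, and the basis case
implies the general one by sesquilinearity and continuity in each of the four slots. So `T` is
crossable iff this matrix is the matrix of a bounded operator. A matrix `M` is the matrix of a
bounded operator iff its bilinear form is bounded on finitely supported sequences: the bound puts
every row in `ℓ²`, so `(M x)_p = Σ_q M_pq x_q` converges, and testing the form against finite
truncations of `M x` gives `‖M x‖ ≤ c ‖x‖`.
-/

open scoped lp

section MatrixForm

variable {ι 𝕜 E : Type*} [RCLike 𝕜] [NormedAddCommGroup E] [InnerProductSpace 𝕜 E]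

def IsBoundedMatrixForm (M : ι → ι → 𝕜) (c : ℝ) : Prop :=
  ∀ (s t : Finset ι) (a b : ι → 𝕜),
    ‖∑ p ∈ s, ∑ q ∈ t, a p * M p q * b q‖
      ≤ c * √(∑ p ∈ s, ‖a p‖ ^ 2) * √(∑ q ∈ t, ‖b q‖ ^ 2)

lemma IsBoundedMatrixForm.mono {M : ι → ι → 𝕜} {c c' : ℝ} (hM : IsBoundedMatrixForm M c)
    (hc : c ≤ c') : IsBoundedMatrixForm M c' := fun s t a b =>
  (hM s t a b).trans (by gcongr)

lemma isBoundedMatrixForm_iff_finsupp {M : ι → ι → 𝕜} {c : ℝ} :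
    IsBoundedMatrixForm M c ↔ ∀ a b : ι →₀ 𝕜,
      ‖∑ p ∈ a.support, ∑ q ∈ b.support, a p * M p q * b q‖
        ≤ c * √(∑ p ∈ a.support, ‖a p‖ ^ 2) * √(∑ q ∈ b.support, ‖b q‖ ^ 2) := by
  refine ⟨fun hM a b => hM _ _ _ _, fun h s t a b => ?_⟩
  set a' := Finsupp.indicator s fun p _ => a p
  set b' := Finsupp.indicator t fun q _ => b q
  have key : ‖a'.sum fun p x => b'.sum fun q y => x * M p q * y‖
      ≤ c * √(a'.sum fun _ x => ‖x‖ ^ 2) * √(b'.sum fun _ y => ‖y‖ ^ 2) := h a' b'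
  simpa (disch := simp) only [a', b', Finsupp.sum_indicator_index] using key

lemma Orthonormal.norm_sum_smul {v : ι → E} (hv : Orthonormal 𝕜 v) (s : Finset ι) (l : ι → 𝕜) :
    ‖∑ i ∈ s, l i • v i‖ = √(∑ i ∈ s, ‖l i‖ ^ 2) := by
  rw [eq_comm, Real.sqrt_eq_iff_eq_sq (by positivity) (norm_nonneg _), @norm_sq_eq_re_inner 𝕜,
    hv.inner_sum]
  simp [RCLike.conj_mul]

lemma Orthonormal.isBoundedMatrixForm_inner_apply {v : ι → E} (hv : Orthonormal 𝕜 v)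
    (A : E →L[𝕜] E) : IsBoundedMatrixForm (fun p q => ⟪v p, A (v q)⟫_𝕜) ‖A‖ := by
  intro s t a b
  set x := ∑ p ∈ s, conj (a p) • v p
  set y := ∑ q ∈ t, b q • v q
  have hxy : ∑ p ∈ s, ∑ q ∈ t, a p * ⟪v p, A (v q)⟫_𝕜 * b q = ⟪x, A y⟫_𝕜 := by
    simp only [x, y, sum_inner, inner_sum, map_sum, map_smul, inner_smul_left, inner_smul_right,
      RCLike.conj_conj, Finset.mul_sum]
    rw [Finset.sum_comm]
    exact Finset.sum_congr rfl fun p _ => Finset.sum_congr rfl fun q _ => by ring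
  have hx : ‖x‖ = √(∑ p ∈ s, ‖a p‖ ^ 2) := by simp [x, hv.norm_sum_smul]
  rw [hxy, ← hx, ← hv.norm_sum_smul]
  calc ‖⟪x, A y⟫_𝕜‖ ≤ ‖x‖ * ‖A y‖ := norm_inner_le_norm x (A y)
    _ ≤ ‖x‖ * (‖A‖ * ‖y‖) := by gcongr; exact A.le_opNorm y
    _ = ‖A‖ * ‖x‖ * ‖y‖ := by ring

lemma sum_norm_sq_le_sq_of_forall_norm_sum_mul_le {v : ι → 𝕜} {C : ℝ}
    (h : ∀ (s : Finset ι) (a : ι → 𝕜), ‖∑ i ∈ s, a i * v i‖ ≤ C * √(∑ i ∈ s, ‖a i‖ ^ 2))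
    (s : Finset ι) : ∑ i ∈ s, ‖v i‖ ^ 2 ≤ C ^ 2 := by
  set S := ∑ i ∈ s, ‖v i‖ ^ 2
  have hS : ∑ i ∈ s, conj (v i) * v i = (S : 𝕜) := by simp [S, RCLike.conj_mul]
  have key := h s fun i => conj (v i)
  simp only [RCLike.norm_conj, hS, RCLike.norm_ofReal] at key
  rw [abs_of_nonneg (by positivity)] at key
  nlinarith [Real.sq_sqrt (show 0 ≤ S by positivity), Real.sqrt_nonneg S, sq_nonneg (C - √S)]

lemma IsBoundedMatrixForm.sum_norm_sq_row_le {M : ι → ι → 𝕜} {c : ℝ}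
    (hM : IsBoundedMatrixForm M c) (p : ι) (t : Finset ι) :
    ∑ q ∈ t, ‖M p q‖ ^ 2 ≤ c ^ 2 :=
  sum_norm_sq_le_sq_of_forall_norm_sum_mul_le (fun t b => by
    simpa [mul_comm (b _)] using hM {p} t 1 b) t

lemma IsBoundedMatrixForm.sum_norm_sq_apply_le {M : ι → ι → 𝕜} {c B : ℝ}
    (hM : IsBoundedMatrixForm M c) (hc : 0 ≤ c) {w y : ι → 𝕜}
    (hw : ∀ t : Finset ι, ∑ q ∈ t, ‖w q‖ ^ 2 ≤ B ^ 2)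
    (hy : ∀ p, HasSum (fun q => M p q * w q) (y p)) (s : Finset ι) :
    ∑ p ∈ s, ‖y p‖ ^ 2 ≤ (c * B) ^ 2 := by
  refine le_trans (sum_norm_sq_le_sq_of_forall_norm_sum_mul_le (C := c * |B|) (fun s a => ?_) s)
    (by rw [mul_pow, mul_pow, sq_abs])
  have hlim : HasSum (fun q => ∑ p ∈ s, a p * M p q * w q) (∑ p ∈ s, a p * y p) :=
    hasSum_sum fun p _ => by simpa only [mul_assoc] using (hy p).mul_left (a p)
  refine le_of_tendsto' hlim.norm fun t => ?_
  rw [Finset.sum_comm]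
  calc ‖∑ p ∈ s, ∑ q ∈ t, a p * M p q * w q‖
      ≤ c * √(∑ p ∈ s, ‖a p‖ ^ 2) * √(∑ q ∈ t, ‖w q‖ ^ 2) := hM s t a w
    _ ≤ c * √(∑ p ∈ s, ‖a p‖ ^ 2) * |B| := by
        gcongr
        rw [← Real.sqrt_sq_eq_abs]
        exact Real.sqrt_le_sqrt (hw t)
    _ = c * |B| * √(∑ p ∈ s, ‖a p‖ ^ 2) := by ring

lemma memℓp_two_of_sum_norm_sq_le {v : ι → 𝕜} {C : ℝ}
    (h : ∀ s : Finset ι, ∑ i ∈ s, ‖v i‖ ^ 2 ≤ C ^ 2) : Memℓp v 2 :=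
  memℓp_gen' (C := C ^ 2) (by simpa using h)

lemma lp.norm_le_of_sum_norm_sq_le {v : ℓ²(ι, 𝕜)} {C : ℝ} (hC : 0 ≤ C)
    (h : ∀ s : Finset ι, ∑ i ∈ s, ‖v i‖ ^ 2 ≤ C ^ 2) : ‖v‖ ≤ C :=
  lp.norm_le_of_forall_sum_le (by simp) hC (by simpa using h)

theorem HilbertBasis.exists_inner_apply_eq_of_isBoundedMatrixForm (F : HilbertBasis ι 𝕜 E)
    {M : ι → ι → 𝕜} {c : ℝ} (hM : IsBoundedMatrixForm M c) (hc : 0 ≤ c) :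
    ∃ A : E →L[𝕜] E, ∀ p q, ⟪F p, A (F q)⟫_𝕜 = M p q := by
  classical
  -- conjugated so that `⟪row p, z⟫ = Σ_q M p q z_q`
  let row (p : ι) : ℓ²(ι, 𝕜) :=
    ⟨fun q => conj (M p q), memℓp_two_of_sum_norm_sq_le (C := c) fun t => by
      simpa using hM.sum_norm_sq_row_le p t⟩
  let coord (p : ι) : E →L[𝕜] 𝕜 := innerSL 𝕜 (row p) ∘L F.repr.toContinuousLinearEquiv
  have hcoord (x : E) (p : ι) : HasSum (fun q => M p q * ⟪F q, x⟫_𝕜) (coord p x) := by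
    refine (lp.hasSum_inner (row p) (F.repr x)).congr_fun fun q => ?_
    rw [F.repr_apply_apply, RCLike.inner_apply, mul_comm]
    exact congrArg _ (RCLike.conj_conj _).symm
  have hbound (x : E) (s : Finset ι) : ∑ p ∈ s, ‖coord p x‖ ^ 2 ≤ (c * ‖x‖) ^ 2 :=
    hM.sum_norm_sq_apply_le hc (fun t => F.orthonormal.sum_inner_products_le x) (hcoord x) s
  let coordsₗ : E →ₗ[𝕜] ℓ²(ι, 𝕜) :=
    { toFun x := ⟨fun p => coord p x, memℓp_two_of_sum_norm_sq_le (hbound x)⟩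
      map_add' x y := lp.ext <| funext fun p => map_add (coord p) x y
      map_smul' a x := lp.ext <| funext fun p => map_smul (coord p) a x }
  let coords : E →L[𝕜] ℓ²(ι, 𝕜) := coordsₗ.mkContinuous c fun x =>
    lp.norm_le_of_sum_norm_sq_le (by positivity) (hbound x)
  refine ⟨F.repr.symm.toContinuousLinearEquiv ∘L coords, fun p q => ?_⟩
  rw [← F.repr_apply_apply]
  change F.repr (F.repr.symm (coords (F q))) p = M p q
  rw [LinearIsometryEquiv.apply_symm_apply]
  show ⟪row p, F.repr (F q)⟫_𝕜 = M p q
  rw [F.repr_self, lp.inner_single_right, RCLike.inner_apply, one_mul]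
  exact RCLike.conj_conj _

theorem HilbertBasis.exists_inner_apply_eq_iff (F : HilbertBasis ι 𝕜 E) (M : ι → ι → 𝕜) :
    (∃ A : E →L[𝕜] E, ∀ p q, ⟪F p, A (F q)⟫_𝕜 = M p q) ↔
      ∃ c, 0 < c ∧ IsBoundedMatrixForm M c := by
  constructor
  · rintro ⟨A, hA⟩
    obtain rfl : (fun p q => ⟪F p, A (F q)⟫_𝕜) = M := funext₂ hA
    exact ⟨‖A‖ + 1, by positivity,
      (F.orthonormal.isBoundedMatrixForm_inner_apply A).mono (by linarith)⟩
  · rintro ⟨c, hc, hM⟩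
    exact F.exists_inner_apply_eq_of_isBoundedMatrixForm hM hc.le

lemma HilbertBasis.ext_continuousLinearMap {𝕜' G : Type*} [Semiring 𝕜'] [TopologicalSpace G]
    [AddCommMonoid G] [Module 𝕜' G] [T2Space G] {σ : 𝕜 →+* 𝕜'} (b : HilbertBasis ι 𝕜 E)
    {f g : E →SL[σ] G} (h : ∀ i, f (b i) = g (b i)) : f = g :=
  ContinuousLinearMap.ext_on (Submodule.dense_iff_topologicalClosure_eq_top.2 b.dense_span)
    (Set.forall_mem_range.2 h)

lemma HilbertBasis.eq_top_of_forall_mem (b : HilbertBasis ι 𝕜 E) {S : Submodule 𝕜 E}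
    (hS : IsClosed (S : Set E)) (h : ∀ i, b i ∈ S) : S = ⊤ :=
  top_le_iff.1 <| b.dense_span ▸ Submodule.topologicalClosure_minimal _
    (Submodule.span_le.2 (Set.range_subset_iff.2 h)) hS

end MatrixForm

namespace TensorSquare

variable [NormedAddCommGroup H] [InnerProductSpace ℂ H] [NormedAddCommGroup K]
  [InnerProductSpace ℂ K] (τ : TensorSquare H K) {ι : Type*}

lemma norm_tmul (a b : H) : ‖τ.tmul a b‖ = ‖a‖ * ‖b‖ := by
  rw [← sq_eq_sq₀ (norm_nonneg _) (by positivity), mul_pow, ← RCLike.ofReal_inj (K := ℂ)]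
  push_cast
  rw [← inner_self_eq_norm_sq_to_K, ← inner_self_eq_norm_sq_to_K, ← inner_self_eq_norm_sq_to_K,
    τ.inner_tmul]

def tmulL : H →L[ℂ] H →L[ℂ] K :=
  LinearMap.mkContinuous₂
    (LinearMap.mk₂ ℂ τ.tmul τ.tmul_add_left τ.tmul_smul_left τ.tmul_add_right τ.tmul_smul_right) 1
    fun a b => by simp [norm_tmul]

@[simp] lemma tmulL_apply (a b : H) : τ.tmulL a b = τ.tmul a b := rfl

lemma orthonormal_tmul {e : ι → H} (he : Orthonormal ℂ e) :
    Orthonormal ℂ fun p : ι × ι => τ.tmul (e p.1) (e p.2) := by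
  classical
  rw [orthonormal_iff_ite] at he ⊢
  intro p q
  simp only [τ.inner_tmul, he, Prod.ext_iff]
  split_ifs <;> simp_all

lemma tmul_mem_of_forall_mem (e : HilbertBasis ι ℂ H) {S : Submodule ℂ K}
    (hS : IsClosed (S : Set K)) (h : ∀ i j, τ.tmul (e i) (e j) ∈ S) (a b : H) :
    τ.tmul a b ∈ S := by
  have apply_mem {f : H →L[ℂ] K} (hf : ∀ i, f (e i) ∈ S) (x : H) : f x ∈ S :=
    Submodule.eq_top_iff'.1
      (e.eq_top_of_forall_mem (S := S.comap (f : H →ₗ[ℂ] K)) (hS.preimage f.continuous) hf) x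
  exact apply_mem (f := τ.tmulL.flip b) (fun i => apply_mem (f := τ.tmulL (e i)) (h i) b) a

def hilbertBasis [CompleteSpace K] (e : HilbertBasis ι ℂ H) : HilbertBasis (ι × ι) ℂ K :=
  HilbertBasis.mk (τ.orthonormal_tmul e.orthonormal) <| by
    set S := Submodule.span ℂ (Set.range fun p : ι × ι => τ.tmul (e p.1) (e p.2))
    have hS : Submodule.span ℂ (Set.range fun p : H × H => τ.tmul p.1 p.2) ≤ S.topologicalClosure :=
      Submodule.span_le.2 <| Set.range_subset_iff.2 fun p =>
        τ.tmul_mem_of_forall_mem e S.isClosed_topologicalClosure (fun i j =>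
          S.le_topologicalClosure (Submodule.subset_span ⟨(i, j), rfl⟩)) p.1 p.2
    rw [← Submodule.dense_iff_topologicalClosure_eq_top.1 τ.dense_span]
    exact Submodule.topologicalClosure_minimal _ hS S.isClosed_topologicalClosure

@[simp] lemma hilbertBasis_apply [CompleteSpace K] (e : HilbertBasis ι ℂ H) (p : ι × ι) :
    τ.hilbertBasis e p = τ.tmul (e p.1) (e p.2) := by
  simp [hilbertBasis]

lemma crossRelB_iff (J : H →SL[starRingEnd ℂ] H) (e : HilbertBasis ι ℂ H)
    (hJe : ∀ i, J (e i) = e i) (T Tc : K →L[ℂ] K) :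
    CrossRelB τ J J T Tc ↔ ∀ i j k l, ⟪τ.tmul (e i) (e j), Tc (τ.tmul (e k) (e l))⟫_ℂ
      = ⟪τ.tmul (e j) (e l), T (τ.tmul (e i) (e k))⟫_ℂ := by
  refine ⟨fun h i j k l => by simpa [hJe] using h (e i) (e j) (e k) (e l), fun h => ?_⟩
  have h₄ (i j k : ι) (ψ₂ : H) : ⟪τ.tmul (e i) (e j), Tc (τ.tmul (e k) ψ₂)⟫_ℂ
      = ⟪τ.tmul (e j) (J ψ₂), T (τ.tmul (e i) (e k))⟫_ℂ := by
    have := e.ext_continuousLinearMap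
      (f := innerSL ℂ (τ.tmul (e i) (e j)) ∘L Tc ∘L τ.tmulL (e k))
      (g := (innerSLFlip ℂ (T (τ.tmul (e i) (e k))) ∘SL τ.tmulL (e j) ∘SL J : H →L[ℂ] ℂ))
      (fun l => by simpa [hJe] using h i j k l)
    simpa using DFunLike.congr_fun this ψ₂
  have h₃ (i j : ι) (ψ₁ ψ₂ : H) : ⟪τ.tmul (e i) (e j), Tc (τ.tmul ψ₁ ψ₂)⟫_ℂ
      = ⟪τ.tmul (e j) (J ψ₂), T (τ.tmul (e i) ψ₁)⟫_ℂ := by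
    have := e.ext_continuousLinearMap
      (f := innerSL ℂ (τ.tmul (e i) (e j)) ∘L Tc ∘L τ.tmulL.flip ψ₂)
      (g := innerSL ℂ (τ.tmul (e j) (J ψ₂)) ∘L T ∘L τ.tmulL (e i))
      (fun k => by simpa using h₄ i j k ψ₂)
    simpa using DFunLike.congr_fun this ψ₁
  have h₂ (i : ι) (φ₂ ψ₁ ψ₂ : H) : ⟪τ.tmul (e i) φ₂, Tc (τ.tmul ψ₁ ψ₂)⟫_ℂ
      = ⟪τ.tmul φ₂ (J ψ₂), T (τ.tmul (e i) ψ₁)⟫_ℂ := by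
    have := e.ext_continuousLinearMap
      (f := innerSLFlip ℂ (Tc (τ.tmul ψ₁ ψ₂)) ∘SL τ.tmulL (e i))
      (g := innerSLFlip ℂ (T (τ.tmul (e i) ψ₁)) ∘SL τ.tmulL.flip (J ψ₂))
      (fun j => by simpa using h₃ i j ψ₁ ψ₂)
    simpa using DFunLike.congr_fun this φ₂
  intro φ₁ φ₂ ψ₁ ψ₂
  have := e.ext_continuousLinearMap
    (f := innerSLFlip ℂ (Tc (τ.tmul ψ₁ ψ₂)) ∘SL τ.tmulL.flip φ₂)
    (g := (innerSL ℂ (τ.tmul φ₂ (J ψ₂)) ∘SL T ∘SL τ.tmulL.flip ψ₁ ∘SL J : H →L⋆[ℂ] ℂ))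
    (fun i => by simpa [hJe] using h₂ i φ₂ ψ₁ ψ₂)
  simpa using DFunLike.congr_fun this φ₁

end TensorSquare

theorem crossable_iff_matrix_bound_general
    [NormedAddCommGroup H] [InnerProductSpace ℂ H]
    [NormedAddCommGroup K] [InnerProductSpace ℂ K] [CompleteSpace K]
    (τ : TensorSquare H K)
    (J : H →SL[starRingEnd ℂ] H)
    (e : HilbertBasis ℕ ℂ H) (hJe : ∀ n, J (e n) = e n)
    (T : K →L[ℂ] K) :
    ((∃ Tc : K →L[ℂ] K, CrossRelB τ J J T Tc) ↔
      ∃ c : ℝ, 0 < c ∧ ∀ a b : (ℕ × ℕ) →₀ ℂ,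
        ‖∑ p ∈ a.support, ∑ q ∈ b.support,
            a p * ⟪τ.tmul (e p.2) (e q.2), T (τ.tmul (e p.1) (e q.1))⟫_ℂ * b q‖
          ≤ c * Real.sqrt (∑ p ∈ a.support, ‖a p‖ ^ 2)
              * Real.sqrt (∑ q ∈ b.support, ‖b q‖ ^ 2)) ∧
    (∀ Tc : K →L[ℂ] K, CrossRelB τ J J T Tc → ∀ i j k l : ℕ,
      ⟪τ.tmul (e i) (e j), Tc (τ.tmul (e k) (e l))⟫_ℂ
        = ⟪τ.tmul (e j) (e l), T (τ.tmul (e i) (e k))⟫_ℂ) := by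
  set F := τ.hilbertBasis e
  set M : ℕ × ℕ → ℕ × ℕ → ℂ := fun p q => ⟪τ.tmul (e p.2) (e q.2), T (τ.tmul (e p.1) (e q.1))⟫_ℂ
  have hcross (Tc : K →L[ℂ] K) : CrossRelB τ J J T Tc ↔ ∀ p q, ⟪F p, Tc (F q)⟫_ℂ = M p q := by
    simp [F, M, τ.crossRelB_iff J e hJe, Prod.forall]
  refine ⟨?_, fun Tc => (τ.crossRelB_iff J e hJe T Tc).1⟩
  simp_rw [hcross, F.exists_inner_apply_eq_iff, isBoundedMatrixForm_iff_finsupp, M]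

/-- Let `J` be an antiunitary involution and `{e_n}` an orthonormal basis
with `J e_n = e_n`. A bounded `T` on `H ⊗ H` is `J`-crossable iff the quadruple sums
`Σ a_{ij} T^{jl}_{ik} b_{kl}` define a bounded bilinear form on `ℓ²(ℕ²)` (tested on finitely
supported sequences); moreover, then `Cross_J(T)^{ij}_{kl} = T^{jl}_{ik}`. -/
theorem crossable_iff_matrix_bound
    [NormedAddCommGroup H] [InnerProductSpace ℂ H] [CompleteSpace H]
    [NormedAddCommGroup K] [InnerProductSpace ℂ K] [CompleteSpace K]
    (τ : TensorSquare H K)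
    (J : H →SL[starRingEnd ℂ] H)
    (hJinv : ∀ x : H, J (J x) = x)
    (hJanti : ∀ x y : H, ⟪J x, J y⟫_ℂ = ⟪y, x⟫_ℂ)
    (e : HilbertBasis ℕ ℂ H) (hJe : ∀ n, J (e n) = e n)
    (T : K →L[ℂ] K) :
    ((∃ Tc : K →L[ℂ] K, CrossRelB τ J J T Tc) ↔
      ∃ c : ℝ, 0 < c ∧ ∀ a b : (ℕ × ℕ) →₀ ℂ,
        ‖∑ p ∈ a.support, ∑ q ∈ b.support,
            a p * ⟪τ.tmul (e p.2) (e q.2), T (τ.tmul (e p.1) (e q.1))⟫_ℂ * b q‖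
          ≤ c * Real.sqrt (∑ p ∈ a.support, ‖a p‖ ^ 2)
              * Real.sqrt (∑ q ∈ b.support, ‖b q‖ ^ 2)) ∧
    (∀ Tc : K →L[ℂ] K, CrossRelB τ J J T Tc → ∀ i j k l : ℕ,
      ⟪τ.tmul (e i) (e j), Tc (τ.tmul (e k) (e l))⟫_ℂ
        = ⟪τ.tmul (e j) (e l), T (τ.tmul (e i) (e k))⟫_ℂ) :=
  crossable_iff_matrix_bound_general τ J e hJe T
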